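/- Let θ > 0 and ω ≠ 0 be real numbers. Suppose η : ℝ × ℝ → ℝ is twice continuously differentiable and satisfies the free backward heat equation θ² ∂η/∂t (t,q) = -(θ⁴/2) ∂²η/∂q² (t,q) for all (t,q) ∈ ℝ × ℝ. Define η^V(t,q) = cosh(ωt)^{-1/2} · exp( ω q² tanh(ωt) / (2θ²) ) · η( tanh(ωt)/ω , q/cosh(ωt) ). Then η^V satisfies the backward heat equation with quadratic (harmonic oscillator) potential V(q) = ω²q²/2, namely θ² ∂η^V/∂t (t,q) = -(θ⁴/2) ∂²η^V/∂q² (t,q) + (ω² q²/2) · η^V(t,q) for all (t,q) ∈ ℝ × ℝ. -/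

import Mathlib

/-- Partial derivative in the first (time) variable of a function of two real variables. -/
noncomputable def partialT (f : ℝ × ℝ → ℝ) (t q : ℝ) : ℝ :=
  deriv (fun s => f (s, q)) t

/-- Partial derivative in the second (space) variable of a function of two real variables. -/
noncomputable def partialQ (f : ℝ × ℝ → ℝ) (t q : ℝ) : ℝ :=
  deriv (fun r => f (t, r)) q

/-- Second partial derivative in the second (space) variable. -/
noncomputable def partialQQ (f : ℝ × ℝ → ℝ) (t q : ℝ) : ℝ :=
  deriv (fun r => partialQ f t r) q

/-!
Write `η^V(t,q) = A(t) exp(B(t) q²) η(τ(t), C(t) q)` and `ℏ = θ²`. In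
`ℏ ∂ₜη^V + (ℏ²/2) ∂²_q η^V` the free equation for `η` absorbs the `∂ₜη` and `∂²_q η` terms as
soon as `τ' = C²`, the `∂_q η` terms cancel when `C' = -2ℏBC`, the terms without `q²` cancel when
`A' = -ℏBA`, and what remains is `(k q²/2) η^V` for `2ℏB' + 4ℏ²B² = k`, a Riccati equation.
With `k = ω²` the hyperbolic choice `A = cosh(ωt)^{-1/2}`, `B = ω tanh(ωt)/(2ℏ)`,
`τ = tanh(ωt)/ω`, `C = 1/cosh(ωt)` solves all four, the Riccati equation by
`tanh² + 1/cosh² = 1`.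
-/

open Real

section PartialDerivatives

variable {η : ℝ × ℝ → ℝ}

theorem partialT_eq_fderiv {t q : ℝ} (h : DifferentiableAt ℝ η (t, q)) :
    partialT η t q = fderiv ℝ η (t, q) (1, 0) :=
  (h.hasFDerivAt.comp_hasDerivAt t ((hasDerivAt_id t).prodMk (hasDerivAt_const t q))).deriv

theorem partialQ_eq_fderiv {t q : ℝ} (h : DifferentiableAt ℝ η (t, q)) :
    partialQ η t q = fderiv ℝ η (t, q) (0, 1) :=
  (h.hasFDerivAt.comp_hasDerivAt q ((hasDerivAt_const q t).prodMk (hasDerivAt_id q))).deriv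

theorem hasDerivAt_partialQ {t q : ℝ} (h : DifferentiableAt ℝ η (t, q)) :
    HasDerivAt (fun r => η (t, r)) (partialQ η t q) q :=
  (h.comp q ((differentiableAt_const t).prodMk differentiableAt_id)).hasDerivAt

theorem hasDerivAt_comp_prodMk {f g : ℝ → ℝ} {f' g' t : ℝ} (hη : DifferentiableAt ℝ η (f t, g t))
    (hf : HasDerivAt f f' t) (hg : HasDerivAt g g' t) :
    HasDerivAt (fun s => η (f s, g s))
      (f' * partialT η (f t) (g t) + g' * partialQ η (f t) (g t)) t := by
  have hsplit : ((f', g') : ℝ × ℝ) = f' • ((1 : ℝ), (0 : ℝ)) + g' • ((0 : ℝ), (1 : ℝ)) := by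
    simp
  have h := hη.hasFDerivAt.comp_hasDerivAt t (hf.prodMk hg)
  rwa [hsplit, map_add, map_smul, map_smul, smul_eq_mul, smul_eq_mul,
    ← partialT_eq_fderiv hη, ← partialQ_eq_fderiv hη] at h

theorem ContDiff.hasDerivAt_partialQ (hη : ContDiff ℝ 2 η) (t q : ℝ) :
    HasDerivAt (fun r => partialQ η t r) (partialQQ η t q) q := by
  have hd : Differentiable ℝ η := hη.differentiable (by norm_num)
  have hD : Differentiable ℝ (fderiv ℝ η) :=
    (hη.fderiv_right (m := 1) le_rfl).differentiable one_ne_zero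
  have heq : (fun r => partialQ η t r) = fun r => fderiv ℝ η (t, r) (0, 1) :=
    funext fun r => partialQ_eq_fderiv (hd _)
  refine DifferentiableAt.hasDerivAt ?_
  rw [heq]
  exact ((hD _).comp q ((differentiableAt_const t).prodMk differentiableAt_id)).clm_apply
    (differentiableAt_const _)

end PartialDerivatives

noncomputable def gaugeTransform (A B τ C : ℝ → ℝ) (η : ℝ × ℝ → ℝ) (p : ℝ × ℝ) : ℝ :=
  A p.1 * exp (B p.1 * p.2 ^ 2) * η (τ p.1, C p.1 * p.2)

section GaugeTransform

variable {A B τ C : ℝ → ℝ} {η : ℝ × ℝ → ℝ}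

theorem partialT_gaugeTransform {t q A' B' τ' C' : ℝ} (hA : HasDerivAt A A' t)
    (hB : HasDerivAt B B' t) (hτ : HasDerivAt τ τ' t) (hC : HasDerivAt C C' t)
    (hη : DifferentiableAt ℝ η (τ t, C t * q)) :
    partialT (gaugeTransform A B τ C η) t q = exp (B t * q ^ 2) *
      ((A' + A t * B' * q ^ 2) * η (τ t, C t * q) +
        A t * (τ' * partialT η (τ t) (C t * q) + C' * q * partialQ η (τ t) (C t * q))) :=
  ((hA.fun_mul (hB.mul_const (q ^ 2)).exp).fun_mul
    (hasDerivAt_comp_prodMk hη hτ (hC.mul_const q))).deriv.trans (by ring)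

theorem partialQ_gaugeTransform (hη : Differentiable ℝ η) (t q : ℝ) :
    partialQ (gaugeTransform A B τ C η) t q = A t * exp (B t * q ^ 2) *
      (2 * B t * q * η (τ t, C t * q) + C t * partialQ η (τ t) (C t * q)) := by
  have hE : HasDerivAt (fun r => exp (B t * r ^ 2)) (exp (B t * q ^ 2) * (B t * (2 * q))) q := by
    simpa using ((hasDerivAt_pow 2 q).const_mul (B t)).exp
  have hG : HasDerivAt (fun r => η (τ t, C t * r)) (partialQ η (τ t) (C t * q) * (C t * 1)) q :=
    (hasDerivAt_partialQ (hη _)).comp q ((hasDerivAt_id q).const_mul (C t))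
  exact ((hE.const_mul (A t)).fun_mul hG).deriv.trans (by ring)

theorem partialQQ_gaugeTransform (hη : ContDiff ℝ 2 η) (t q : ℝ) :
    partialQQ (gaugeTransform A B τ C η) t q = A t * exp (B t * q ^ 2) *
      ((4 * B t ^ 2 * q ^ 2 + 2 * B t) * η (τ t, C t * q) +
        4 * B t * C t * q * partialQ η (τ t) (C t * q) +
        C t ^ 2 * partialQQ η (τ t) (C t * q)) := by
  have hd : Differentiable ℝ η := hη.differentiable (by norm_num)
  have hE : HasDerivAt (fun r => exp (B t * r ^ 2)) (exp (B t * q ^ 2) * (B t * (2 * q))) q := by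
    simpa using ((hasDerivAt_pow 2 q).const_mul (B t)).exp
  have hCq : HasDerivAt (fun r => C t * r) (C t) q := by
    simpa using (hasDerivAt_id q).const_mul (C t)
  have hG : HasDerivAt (fun r => η (τ t, C t * r)) (partialQ η (τ t) (C t * q) * C t) q :=
    (hasDerivAt_partialQ (hd _)).comp q hCq
  have hGq : HasDerivAt (fun r => partialQ η (τ t) (C t * r))
      (partialQQ η (τ t) (C t * q) * C t) q :=
    (hη.hasDerivAt_partialQ _ _).comp q hCq
  have hlin : HasDerivAt (fun r => 2 * B t * r) (2 * B t) q := by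
    simpa using (hasDerivAt_id q).const_mul (2 * B t)
  have hQ : (fun r => partialQ (gaugeTransform A B τ C η) t r) = fun r => A t * exp (B t * r ^ 2) *
      (2 * B t * r * η (τ t, C t * r) + C t * partialQ η (τ t) (C t * r)) :=
    funext (partialQ_gaugeTransform hd t)
  rw [partialQQ, hQ]
  exact ((hE.const_mul (A t)).fun_mul ((hlin.fun_mul hG).fun_add (hGq.const_mul (C t)))).deriv.trans
    (by ring)

theorem gaugeTransform_solves {ℏ k t q B' : ℝ} (hη : ContDiff ℝ 2 η)
    (hfree : ℏ * partialT η (τ t) (C t * q) = -(ℏ ^ 2 / 2) * partialQQ η (τ t) (C t * q))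
    (hA : HasDerivAt A (-(ℏ * B t * A t)) t) (hB : HasDerivAt B B' t)
    (hRiccati : 2 * ℏ * B' + 4 * ℏ ^ 2 * B t ^ 2 = k) (hτ : HasDerivAt τ (C t ^ 2) t)
    (hC : HasDerivAt C (-(2 * ℏ * B t * C t)) t) :
    ℏ * partialT (gaugeTransform A B τ C η) t q =
      -(ℏ ^ 2 / 2) * partialQQ (gaugeTransform A B τ C η) t q +
        k * q ^ 2 / 2 * gaugeTransform A B τ C η (t, q) := by
  rw [partialT_gaugeTransform hA hB hτ hC (hη.differentiable (by norm_num) _),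
    partialQQ_gaugeTransform hη, gaugeTransform]
  linear_combination (A t * exp (B t * q ^ 2) * C t ^ 2) * hfree +
    (A t * exp (B t * q ^ 2) * q ^ 2 * η (τ t, C t * q) / 2) * hRiccati

end GaugeTransform

theorem HasDerivAt.comp_const_mul {f : ℝ → ℝ} {f' ω t : ℝ} (hf : HasDerivAt f f' (ω * t)) :
    HasDerivAt (fun s => f (ω * s)) (f' * ω) t :=
  hf.comp t (((hasDerivAt_id t).const_mul ω).congr_deriv (mul_one ω))

namespace Real

theorem tanh_sq_add_inv_cosh_sq (x : ℝ) : tanh x ^ 2 + (cosh x)⁻¹ ^ 2 = 1 := by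
  rw [tanh_eq_sinh_div_cosh]
  field_simp
  linear_combination -cosh_sq_sub_sinh_sq x

theorem hasDerivAt_tanh (x : ℝ) : HasDerivAt tanh ((cosh x)⁻¹ ^ 2) x := by
  have h := (hasDerivAt_sinh x).div (hasDerivAt_cosh x) (cosh_pos x).ne'
  rw [show sinh / cosh = tanh from funext fun y => (tanh_eq_sinh_div_cosh y).symm] at h
  refine h.congr_deriv ?_
  field_simp
  linear_combination cosh_sq_sub_sinh_sq x

theorem hasDerivAt_cosh_rpow (p x : ℝ) :
    HasDerivAt (fun y => cosh y ^ p) (p * tanh x * cosh x ^ p) x := by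
  refine ((hasDerivAt_rpow_const (Or.inl (cosh_pos x).ne')).comp x
    (hasDerivAt_cosh x)).congr_deriv ?_
  rw [rpow_sub (cosh_pos x), rpow_one, tanh_eq_sinh_div_cosh]
  ring

theorem hasDerivAt_inv_cosh (x : ℝ) :
    HasDerivAt (fun y => (cosh y)⁻¹) (-(tanh x * (cosh x)⁻¹)) x := by
  refine ((hasDerivAt_cosh x).inv (cosh_pos x).ne').congr_deriv ?_
  rw [tanh_eq_sinh_div_cosh]
  ring

end Real

/-- from a `C²` solution `η` of the free backward heat equation
`θ² η_t = -(θ⁴/2) η_qq`, the function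
`η^V(t,q) = cosh(ωt)^{-1/2} exp(ωq² tanh(ωt)/(2θ²)) η(tanh(ωt)/ω, q/cosh(ωt))`
solves the backward heat equation with harmonic potential `V(q) = ω²q²/2`. -/
theorem heat_quadratic_potential (θ ω : ℝ) (hθ : 0 < θ) (hω : ω ≠ 0) (η : ℝ × ℝ → ℝ)
    (hη : ContDiff ℝ 2 η)
    (hfree : ∀ t q : ℝ, θ ^ 2 * partialT η t q = -(θ ^ 4 / 2) * partialQQ η t q)
    (ηV : ℝ × ℝ → ℝ)
    (hηV : ∀ t q : ℝ,
      ηV (t, q) = Real.cosh (ω * t) ^ (-(1 : ℝ) / 2) *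
        Real.exp (ω * q ^ 2 * Real.tanh (ω * t) / (2 * θ ^ 2)) *
        η (Real.tanh (ω * t) / ω, q / Real.cosh (ω * t))) :
    ∀ t q : ℝ,
      θ ^ 2 * partialT ηV t q =
        -(θ ^ 4 / 2) * partialQQ ηV t q + ω ^ 2 * q ^ 2 / 2 * ηV (t, q) := by
  intro t q
  have hηV' : ηV = gaugeTransform (fun s => cosh (ω * s) ^ (-(1 : ℝ) / 2))
      (fun s => ω * tanh (ω * s) / (2 * θ ^ 2)) (fun s => tanh (ω * s) / ω)
      (fun s => (cosh (ω * s))⁻¹) η := by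
    ext ⟨s, r⟩
    rw [hηV, gaugeTransform]
    ring_nf
  rw [hηV', show θ ^ 4 = (θ ^ 2) ^ 2 by ring]
  refine gaugeTransform_solves (ℏ := θ ^ 2) (q := q) hη (by linear_combination hfree _ _) ?_
    ((((hasDerivAt_tanh (ω * t)).comp_const_mul).const_mul ω).div_const (2 * θ ^ 2)) ?_
    (((hasDerivAt_tanh (ω * t)).comp_const_mul).div_const ω |>.congr_deriv ?_)
    (((hasDerivAt_inv_cosh (ω * t)).comp_const_mul).congr_deriv ?_)
  · exact ((hasDerivAt_cosh_rpow _ (ω * t)).comp_const_mul).congr_deriv (by field_simp)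
  · have h := tanh_sq_add_inv_cosh_sq (ω * t)
    field_simp at h ⊢
    linear_combination 4 * h
  · field_simp
  · field_simp
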